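/- arXiv:2407.19250 — 5 statements merged into one kernel-verified Lean document; each statement's English description precedes it below -/
import Mathlib

section
/- Let n ≥ 1, A > −1, ρ0 > 0, Λ > 0, G > 0. Define b(t) = (8πGρ0/Λ)·sinh²(√(nΛ/(2(n−1)))·(1+A)·t) and a(t) = b(t)^(1/(n(1+A))). Then a satisfies the Friedmann equation (a'/a)² = (16πG/(n(n−1)))·(ρ0·a^(−n(1+A)) + Λ/(8πG)) for all t > 0, with a(0) = 0. -/
open Real Filter

/-- Big-bang solution of the flat Friedmann equation with linear equation of
state and positive cosmological constant `Λ`: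
`a = b^{1/(n(1+A))}` with `b(t) = (8πGρ0/Λ) sinh²(√(nΛ/(2(n−1)))(1+A)t)`. -/
theorem friedmann_sinh_solution (n : ℕ) (hn : 2 ≤ n) (A ρ0 Λ G : ℝ)
    (hA : -1 < A) (hρ0 : 0 < ρ0) (hΛ : 0 < Λ) (hG : 0 < G) :
    let b : ℝ → ℝ := fun t => (8 * π * G * ρ0 / Λ) *
      Real.sinh (Real.sqrt ((n : ℝ) * Λ / (2 * ((n : ℝ) - 1))) * (1 + A) * t) ^ 2
    let a : ℝ → ℝ := fun t => b t ^ (1 / ((n : ℝ) * (1 + A)))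
    (∀ t > (0 : ℝ),
      (deriv a t / a t) ^ 2 =
        (16 * π * G / ((n : ℝ) * ((n : ℝ) - 1))) *
          (ρ0 * a t ^ (-((n : ℝ) * (1 + A))) + Λ / (8 * π * G))) ∧
    a 0 = 0 := by
  intro b a
  have hn2 : (2 : ℝ) ≤ (n : ℝ) := by exact_mod_cast hn
  have hn1 : (0 : ℝ) < (n : ℝ) - 1 := by linarith
  have hnpos : (0 : ℝ) < (n : ℝ) := by linarith
  have hπ : (0 : ℝ) < π := Real.pi_pos
  have hAp : (0 : ℝ) < 1 + A := by linarith
  have hc : (0 : ℝ) < 8 * π * G * ρ0 / Λ := by positivity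
  set k : ℝ := Real.sqrt ((n : ℝ) * Λ / (2 * ((n : ℝ) - 1))) with hk
  have hk2 : k ^ 2 = (n : ℝ) * Λ / (2 * ((n : ℝ) - 1)) := by
    rw [hk, sq_sqrt (by positivity)]
  have hkpos : 0 < k := by
    rw [hk]; exact Real.sqrt_pos.mpr (by positivity)
  set m : ℝ := k * (1 + A) with hm
  have hmpos : 0 < m := by positivity
  set p : ℝ := 1 / ((n : ℝ) * (1 + A)) with hp
  have hna : (n : ℝ) * (1 + A) ≠ 0 := by positivity
  constructor
  · intro t ht
    have hs : 0 < Real.sinh (m * t) := Real.sinh_pos_iff.mpr (by positivity)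
    have hb : 0 < b t := by
      simp only [b]
      positivity
    -- derivative of b
    have h1 : HasDerivAt (fun t : ℝ => m * t) m t := by
      simpa using (hasDerivAt_id t).const_mul m
    have h2 : HasDerivAt (fun t : ℝ => Real.sinh (m * t)) (Real.cosh (m * t) * m) t :=
      (Real.hasDerivAt_sinh (m * t)).comp t h1
    have h3 : HasDerivAt b
        ((8 * π * G * ρ0 / Λ) * (2 * Real.sinh (m * t) ^ 1 * (Real.cosh (m * t) * m))) t :=
      (h2.pow 2).const_mul (8 * π * G * ρ0 / Λ)
    rw [pow_one] at h3
    have ha : HasDerivAt a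
        ((8 * π * G * ρ0 / Λ) * (2 * Real.sinh (m * t) * (Real.cosh (m * t) * m)) * p *
          b t ^ (p - 1)) t :=
      h3.rpow_const (Or.inl hb.ne')
    have hda : deriv a t = (8 * π * G * ρ0 / Λ) * (2 * Real.sinh (m * t) * (Real.cosh (m * t) * m)) * p * b t ^ (p - 1) := ha.deriv
    have hbp : b t ^ (p - 1) = b t ^ p / b t := by
      rw [Real.rpow_sub hb, Real.rpow_one]
    have hap : a t ^ (-((n : ℝ) * (1 + A))) = (b t)⁻¹ := by
      show (b t ^ p) ^ (-((n : ℝ) * (1 + A))) = (b t)⁻¹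
      rw [← Real.rpow_mul hb.le]
      have hpq : p * (-((n : ℝ) * (1 + A))) = -1 := by
        rw [hp]; field_simp
      rw [hpq, Real.rpow_neg_one]
    have hbpne : b t ^ p ≠ 0 := (Real.rpow_pos_of_pos hb p).ne'
    have hbt : b t = (8 * π * G * ρ0 / Λ) * Real.sinh (m * t) ^ 2 := rfl
    have hat : a t = b t ^ p := rfl
    have hch : Real.cosh (m * t) ^ 2 = Real.sinh (m * t) ^ 2 + 1 := Real.cosh_sq (m * t)
    have hm2 : m ^ 2 = ((n : ℝ) * Λ / (2 * ((n : ℝ) - 1))) * (1 + A) ^ 2 := by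
      rw [hm, mul_pow, hk2]
    have hL : deriv a t / a t = 2 * m * p * Real.cosh (m * t) / Real.sinh (m * t) := by
      rw [hda, hat, hbp, hbt]
      field_simp
    have hL2 : (deriv a t / a t) ^ 2
        = 4 * m ^ 2 * p ^ 2 * Real.cosh (m * t) ^ 2 / Real.sinh (m * t) ^ 2 := by
      rw [hL]; ring
    rw [hL2, hch, hm2, hap, hbt, hp]
    field_simp
    ring
  · show b 0 ^ p = 0
    have : b 0 = 0 := by simp [b]
    have hppos : (0 : ℝ) < p := by rw [hp]; positivity
    rw [this]
    exact Real.zero_rpow hppos.ne'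
end

section
/- Let n ≥ 2, A > −1, ρ0 > 0, G > 0 and Λ < 0. Define b(t) = (8πGρ0/(−Λ))·sin²(√(n(−Λ)/(2(n−1)))·(1+A)·t) and a(t) = b(t)^(1/(n(1+A))) on intervals where b(t) > 0. Then a satisfies (a'/a)² = (16πG/(n(n−1)))·(ρ0·a^(−n(1+A)) + Λ/(8πG)) wherever b(t) > 0, and a is periodic in t with period π/((1+A)√(n(−Λ)/(2(n−1)))) (big bang – big crunch universe). -/
open Real

/-- Big bang – big crunch: for `Λ < 0` the flat Friedmann equation with linear
equation of state has the oscillatory solution `a = b^{1/(n(1+A))}` with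
`b(t) = (8πGρ0/(−Λ)) sin²(√(n(−Λ)/(2(n−1)))(1+A)t)`, periodic with period
`π/((1+A)√(n(−Λ)/(2(n−1))))`. -/
theorem friedmann_bigBang_bigCrunch (n : ℕ) (hn : 2 ≤ n) (A ρ0 G Λ : ℝ)
    (hA : -1 < A) (hρ0 : 0 < ρ0) (hG : 0 < G) (hΛ : Λ < 0) :
    let b : ℝ → ℝ := fun t => (8 * π * G * ρ0 / (-Λ)) *
      Real.sin (Real.sqrt ((n : ℝ) * (-Λ) / (2 * ((n : ℝ) - 1))) * (1 + A) * t) ^ 2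
    let a : ℝ → ℝ := fun t => b t ^ (1 / ((n : ℝ) * (1 + A)))
    (∀ t : ℝ, 0 < b t →
      (deriv a t / a t) ^ 2 =
        (16 * π * G / ((n : ℝ) * ((n : ℝ) - 1))) *
          (ρ0 * a t ^ (-((n : ℝ) * (1 + A))) + Λ / (8 * π * G))) ∧
    Function.Periodic a
      (π / ((1 + A) * Real.sqrt ((n : ℝ) * (-Λ) / (2 * ((n : ℝ) - 1))))) := by
  intro b a
  have hA1 : (0:ℝ) < 1 + A := by linarith
  have hn2 : (2:ℝ) ≤ (n:ℝ) := by exact_mod_cast hn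
  have hnR : (0:ℝ) < (n:ℝ) := by linarith
  have hn1 : (0:ℝ) < (n:ℝ) - 1 := by linarith
  have hΛ' : (0:ℝ) < -Λ := by linarith
  have hπ : (0:ℝ) < π := Real.pi_pos
  set ω := Real.sqrt ((n : ℝ) * (-Λ) / (2 * ((n : ℝ) - 1))) with hωdef
  have hωsq : ω ^ 2 = (n:ℝ) * (-Λ) / (2 * ((n:ℝ) - 1)) :=
    Real.sq_sqrt (by positivity)
  have hωpos : 0 < ω := Real.sqrt_pos.mpr (by positivity)
  set C := 8 * π * G * ρ0 / (-Λ) with hCdef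
  have hC : 0 < C := by positivity
  set k := ω * (1 + A) with hkdef
  set p := 1 / ((n : ℝ) * (1 + A)) with hpdef
  have hnA : (n:ℝ) * (1 + A) ≠ 0 := by positivity
  have hbeq : ∀ s, b s = C * Real.sin (k * s) ^ 2 := fun s => rfl
  constructor
  · intro t hbt
    have hbt' : 0 < C * Real.sin (k * t) ^ 2 := by rw [← hbeq t]; exact hbt
    have hsin : Real.sin (k * t) ≠ 0 := by
      intro h
      rw [h] at hbt'
      simp at hbt'
    set S := Real.sin (k * t) with hSdef
    set Co := Real.cos (k * t) with hCodef
    -- derivative of b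
    have hderivb : HasDerivAt b (C * (2 * S * (Co * k))) t := by
      have h1 : HasDerivAt (fun s : ℝ => k * s) k t := by
        simpa using (hasDerivAt_id t).const_mul k
      have h2 : HasDerivAt (fun s : ℝ => Real.sin (k * s)) (Co * k) t :=
        (Real.hasDerivAt_sin (k * t)).comp t h1
      have h3 : HasDerivAt (fun s : ℝ => Real.sin (k * s) ^ 2)
          (2 * Real.sin (k * t) ^ 1 * (Co * k)) t := h2.pow 2
      have h4 := h3.const_mul C
      rw [pow_one] at h4
      exact h4
    have hbne : b t ≠ 0 := ne_of_gt hbt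
    have hderiva : HasDerivAt a
        ((C * (2 * S * (Co * k))) * p * b t ^ (p - 1)) t :=
      hderivb.rpow_const (Or.inl hbne)
    have hbp : b t ^ (p - 1) = b t ^ p / b t := by
      rw [Real.rpow_sub hbt, Real.rpow_one]
    have hu : (0:ℝ) < b t ^ p := Real.rpow_pos_of_pos hbt p
    have haneg : a t ^ (-((n:ℝ) * (1 + A))) = (b t)⁻¹ := by
      show (b t ^ p) ^ (-((n:ℝ) * (1 + A))) = (b t)⁻¹
      rw [← Real.rpow_mul hbt.le,
        show p * (-((n:ℝ) * (1 + A))) = -1 by rw [hpdef]; field_simp,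
        Real.rpow_neg_one]
    have hat : a t = b t ^ p := rfl
    rw [hderiva.deriv, hat, haneg, hbp, hbeq t, ← hSdef]
    have e1 : C * (2 * S * (Co * k)) * p * ((C * S ^ 2) ^ p / (C * S ^ 2)) /
        (C * S ^ 2) ^ p = 2 * Co * ω / (S * (n:ℝ)) := by
      rw [hkdef, hpdef]
      have hup : (C * S ^ 2) ^ p ≠ 0 := ne_of_gt (Real.rpow_pos_of_pos hbt' p)
      field_simp
    rw [e1]
    have e2 : (2 * Co * ω / (S * (n:ℝ))) ^ 2 =
        ω ^ 2 * (2 * Co) ^ 2 / (S * (n:ℝ)) ^ 2 := by ring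
    rw [e2, hωsq, show (2 * Co) ^ 2 = 4 * (1 - S ^ 2) by
      have := Real.sin_sq_add_cos_sq (k * t); rw [mul_pow]; nlinarith]
    rw [hCdef]
    have hS2 : S ^ 2 ≠ 0 := pow_ne_zero 2 hsin
    field_simp
    ring
  · intro t
    have key : b (t + π / ((1 + A) * ω)) = b t := by
      rw [hbeq, hbeq]
      have harg : k * (t + π / ((1 + A) * ω)) = k * t + π := by
        rw [hkdef]; field_simp
      rw [harg, Real.sin_add_pi, neg_sq]
    show b _ ^ _ = b _ ^ _
    rw [key]
end

section
/- With the asymptotic solution a(t) = b(t)^(1/(n(1+A))), b(t) = (8πGρ0/Λ)·sinh²(√(nΛ/(2(n−1)))·(1+A)·t), Λ > 0, the limit lim_{t→∞} a'(t)/a(t) exists and equals √(2Λ/(n(n−1))). -/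
open Real Filter

lemma coth_tendsto_one :
    Tendsto (fun x : ℝ => Real.cosh x / Real.sinh x) atTop (nhds 1) := by
  have h0 : Tendsto (fun x : ℝ => Real.exp (-(2 * x))) atTop (nhds 0) := by
    refine Real.tendsto_exp_atBot.comp ?_
    refine tendsto_neg_atBot_iff.mpr ?_
    exact tendsto_atTop_atTop.mpr (fun bb => ⟨bb / 2, fun x hx => by linarith⟩)
  have hlim : Tendsto (fun x : ℝ => (1 + Real.exp (-(2 * x))) / (1 - Real.exp (-(2 * x))))
      atTop (nhds 1) := by
    have := ((tendsto_const_nhds (x := (1:ℝ))).add h0).div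
      ((tendsto_const_nhds (x := (1:ℝ))).sub h0) (by norm_num : (1:ℝ) - 0 ≠ 0)
    simpa [Pi.div_def] using this
  refine hlim.congr' ?_
  filter_upwards [eventually_gt_atTop 0] with x hx
  have hy : 1 < Real.exp x := by nlinarith [Real.add_one_le_exp x]
  have hy0 : (0:ℝ) < Real.exp x := Real.exp_pos x
  have hyi : (Real.exp x)⁻¹ < 1 := by
    rw [inv_lt_one_iff₀]; right; exact hy
  have hyi0 : 0 < (Real.exp x)⁻¹ := inv_pos.mpr hy0
  have he2 : Real.exp (-(2 * x)) = ((Real.exp x)⁻¹) ^ 2 := by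
    rw [show -(2*x) = (-x) + (-x) by ring, Real.exp_add, Real.exp_neg]; ring
  rw [he2, Real.cosh_eq, Real.sinh_eq, Real.exp_neg]
  have hd1 : Real.exp x - (Real.exp x)⁻¹ ≠ 0 := by nlinarith
  have hd2 : 1 - ((Real.exp x)⁻¹)^2 ≠ 0 := by nlinarith
  field_simp

lemma aux_rate (C k c : ℝ) (hC : 0 < C) (hk : 0 < k) (hc : 0 < c) :
    Tendsto (fun t => deriv (fun t => (C * Real.sinh (k * t) ^ 2) ^ c) t /
      (C * Real.sinh (k * t) ^ 2) ^ c) atTop (nhds (c * (2 * k))) := by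
  have hlim : Tendsto (fun t => c * (2 * k) * (Real.cosh (k * t) / Real.sinh (k * t)))
      atTop (nhds (c * (2 * k) * 1)) := by
    apply Tendsto.const_mul
    refine coth_tendsto_one.comp ?_
    exact tendsto_atTop_atTop.mpr (fun bb => ⟨bb / k, fun x hx => by
      have := (div_le_iff₀ hk).mp hx; linarith⟩)
  rw [mul_one] at hlim
  refine hlim.congr' ?_
  filter_upwards [eventually_gt_atTop 0] with t ht
  have harg : 0 < k * t := by positivity
  have hsinh : 0 < Real.sinh (k * t) := by
    exact Real.sinh_pos_iff.mpr harg
  have hbt : 0 < C * Real.sinh (k * t) ^ 2 := by positivity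
  have hinner : HasDerivAt (fun t : ℝ => Real.sinh (k * t)) (Real.cosh (k * t) * k) t := by
    have h1 : HasDerivAt (fun y : ℝ => k * y) k t := by
      simpa using (hasDerivAt_id t).const_mul k
    exact (Real.hasDerivAt_sinh (k * t)).comp t h1
  have hb : HasDerivAt (fun t => C * Real.sinh (k * t) ^ 2)
      (C * (2 * Real.sinh (k * t) * (Real.cosh (k * t) * k))) t := by
    have := (hinner.pow 2).const_mul C
    exact this.congr_deriv (by ring)
  have ha : HasDerivAt (fun t => (C * Real.sinh (k * t) ^ 2) ^ c)
      (c * (C * Real.sinh (k * t) ^ 2) ^ (c - 1) *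
        (C * (2 * Real.sinh (k * t) * (Real.cosh (k * t) * k)))) t := by
    have h := (Real.hasDerivAt_rpow_const (p := c) (Or.inl hbt.ne')).comp t hb
    exact h
  rw [ha.deriv]
  have hbsub : (C * Real.sinh (k * t) ^ 2) ^ (c - 1)
      = (C * Real.sinh (k * t) ^ 2) ^ c / (C * Real.sinh (k * t) ^ 2) := by
    rw [Real.rpow_sub hbt, Real.rpow_one]
  rw [hbsub]
  have hbc : (0:ℝ) < (C * Real.sinh (k * t) ^ 2) ^ c := Real.rpow_pos_of_pos hbt c
  field_simp

/-- The asymptotic exponential growth rate (dark energy) of the big-bang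
solution with positive cosmological constant is `√(2Λ/(n(n−1)))`. -/
theorem friedmann_sinh_growth_rate (n : ℕ) (hn : 2 ≤ n) (A ρ0 G Λ : ℝ)
    (hA : -1 < A) (hρ0 : 0 < ρ0) (hG : 0 < G) (hΛ : 0 < Λ) :
    let b : ℝ → ℝ := fun t => (8 * π * G * ρ0 / Λ) *
      Real.sinh (Real.sqrt ((n : ℝ) * Λ / (2 * ((n : ℝ) - 1))) * (1 + A) * t) ^ 2
    let a : ℝ → ℝ := fun t => b t ^ (1 / ((n : ℝ) * (1 + A)))
    Tendsto (fun t => deriv a t / a t) atTop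
      (nhds (Real.sqrt (2 * Λ / ((n : ℝ) * ((n : ℝ) - 1))))) := by
  intro b a
  have hn2 : (2:ℝ) ≤ (n:ℝ) := by exact_mod_cast hn
  have hn0 : (0:ℝ) < (n:ℝ) := by linarith
  have hn1 : (0:ℝ) < (n:ℝ) - 1 := by linarith
  have h1A : (0:ℝ) < 1 + A := by linarith
  have hsq : (0:ℝ) < (n : ℝ) * Λ / (2 * ((n : ℝ) - 1)) := by positivity
  have hspos : 0 < Real.sqrt ((n : ℝ) * Λ / (2 * ((n : ℝ) - 1))) := Real.sqrt_pos.mpr hsq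
  have hCpos : 0 < 8 * π * G * ρ0 / Λ := by
    have := Real.pi_pos; positivity
  have hkpos : 0 < Real.sqrt ((n : ℝ) * Λ / (2 * ((n : ℝ) - 1))) * (1 + A) := by positivity
  have hcpos : 0 < 1 / ((n : ℝ) * (1 + A)) := by positivity
  have key := aux_rate (8 * π * G * ρ0 / Λ)
    (Real.sqrt ((n : ℝ) * Λ / (2 * ((n : ℝ) - 1))) * (1 + A))
    (1 / ((n : ℝ) * (1 + A))) hCpos hkpos hcpos
  have hfun : (fun t => deriv a t / a t)
      = fun t => deriv (fun t => ((8 * π * G * ρ0 / Λ) *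
          Real.sinh (Real.sqrt ((n : ℝ) * Λ / (2 * ((n : ℝ) - 1))) * (1 + A) * t) ^ 2)
          ^ (1 / ((n : ℝ) * (1 + A)))) t /
        ((8 * π * G * ρ0 / Λ) *
          Real.sinh (Real.sqrt ((n : ℝ) * Λ / (2 * ((n : ℝ) - 1))) * (1 + A) * t) ^ 2)
          ^ (1 / ((n : ℝ) * (1 + A))) := by
    rfl
  rw [hfun]
  have hval : (1 / ((n : ℝ) * (1 + A))) *
      (2 * (Real.sqrt ((n : ℝ) * Λ / (2 * ((n : ℝ) - 1))) * (1 + A)))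
      = Real.sqrt (2 * Λ / ((n : ℝ) * ((n : ℝ) - 1))) := by
    have h2 : 2 * Λ / ((n : ℝ) * ((n : ℝ) - 1))
        = (2 / (n:ℝ))^2 * ((n : ℝ) * Λ / (2 * ((n : ℝ) - 1))) := by
      field_simp
    rw [h2, Real.sqrt_mul (by positivity), Real.sqrt_sq (by positivity : (0:ℝ) ≤ 2 / (n:ℝ))]
    field_simp
  rw [← hval]
  exact key
end

section
/- Let n ≥ 2, G > 0, A > −1, B > 0, C > 0, α ∈ [0,1]. Suppose a: (0,∞) → (0,∞) is differentiable, a' > 0, a(t) → ∞ as t → ∞, and satisfies (a'/a)² = (16πG/(n(n−1)))·(1+A)^(−1/(α+1))·(C·a^(−n(1+A)(α+1)) + B)^(1/(α+1)). Then lim_{t→∞} a'(t)/a(t) = 4·√(πG/(n(n−1)))·(B/(1+A))^(1/(2(α+1))). -/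
open Real Filter Topology

/-! As `a → ∞` the term `C a^{-n(1+A)(α+1)}` dies out, so the Friedmann equation forces
`(a'/a)²` to converge to `16πG/(n(n-1)) · (B/(1+A))^{1/(α+1)}`; since `a' > 0`, `a'/a` is the
nonnegative square root of this quantity and converges to the square root of the limit. -/

theorem Filter.Tendsto.of_sq_of_nonneg {ι : Type*} {l : Filter ι} {f : ι → ℝ} {L : ℝ}
    (hf : ∀ᶠ i in l, 0 ≤ f i) (hL : 0 ≤ L) (h : Tendsto (fun i => f i ^ 2) l (𝓝 (L ^ 2))) :
    Tendsto f l (𝓝 L) := by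
  have hsqrt := h.sqrt
  rw [sqrt_sq hL] at hsqrt
  exact hsqrt.congr' (hf.mono fun i hi => sqrt_sq hi)

theorem tendsto_mul_rpow_neg_add_rpow_atTop {m p : ℝ} (hm : 0 < m) (hp : 0 ≤ p) (B C : ℝ) :
    Tendsto (fun x : ℝ => (C * x ^ (-m) + B) ^ p) atTop (𝓝 (B ^ p)) := by
  have hbase : Tendsto (fun x : ℝ => C * x ^ (-m) + B) atTop (𝓝 B) := by
    simpa using ((tendsto_rpow_neg_atTop hm).const_mul C).add_const B
  exact (continuousAt_rpow_const B p (Or.inr hp)).tendsto.comp hbase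

theorem four_mul_sqrt_mul_div_rpow_sq {x B c : ℝ} (hx : 0 ≤ x) (hB : 0 ≤ B) (hc : 0 ≤ c)
    (q : ℝ) :
    (4 * √x * (B / c) ^ (1 / (2 * q))) ^ 2 = 16 * x * c ^ (-(1 / q)) * B ^ (1 / q) := by
  have hhalf : ((B / c) ^ (1 / (2 * q))) ^ 2 = (B / c) ^ (1 / q) := by
    rw [← rpow_mul_natCast (div_nonneg hB hc)]
    congr 1
    push_cast
    ring
  rw [mul_pow, mul_pow, hhalf, sq_sqrt hx, div_rpow hB hc, rpow_neg hc]
  ring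

theorem chaplygin_universal_growth_rate_general (n : ℕ) (hn : 2 ≤ n)
    (G A B C α : ℝ) (hG : 0 < G) (hA : -1 < A) (hB : 0 < B)
    (hα0 : 0 ≤ α) (a : ℝ → ℝ)
    (hpos : ∀ t > (0 : ℝ), 0 < a t)
    (hinc : ∀ t > (0 : ℝ), 0 < deriv a t)
    (hinf : Tendsto a atTop atTop)
    (hode : ∀ t > (0 : ℝ),
      (deriv a t / a t) ^ 2 =
        (16 * π * G / ((n : ℝ) * ((n : ℝ) - 1))) * (1 + A) ^ (-(1 / (α + 1))) *
          (C * a t ^ (-((n : ℝ) * (1 + A) * (α + 1))) + B) ^ (1 / (α + 1))) :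
    Tendsto (fun t => deriv a t / a t) atTop
      (nhds (4 * Real.sqrt (π * G / ((n : ℝ) * ((n : ℝ) - 1))) *
        (B / (1 + A)) ^ (1 / (2 * (α + 1))))) := by
  have hn' : (2 : ℝ) ≤ n := by exact_mod_cast hn
  have hD : 0 < (n : ℝ) * ((n : ℝ) - 1) := by nlinarith
  have hx : 0 ≤ π * G / ((n : ℝ) * ((n : ℝ) - 1)) := by positivity
  have hA' : 0 < 1 + A := by linarith
  have hα : 0 < α + 1 := by linarith
  have hexp : 0 < (n : ℝ) * (1 + A) * (α + 1) := by positivity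
  have hdensity := (tendsto_mul_rpow_neg_add_rpow_atTop hexp (by positivity : 0 ≤ 1 / (α + 1))
    B C).comp hinf
  refine Filter.Tendsto.of_sq_of_nonneg ?_ (by positivity) ?_
  · filter_upwards [eventually_gt_atTop 0] with t ht
    exact (div_pos (hinc t ht) (hpos t ht)).le
  · rw [four_mul_sqrt_mul_div_rpow_sq hx hB.le hA'.le]
    have hlim := hdensity.const_mul
      (16 * π * G / ((n : ℝ) * ((n : ℝ) - 1)) * (1 + A) ^ (-(1 / (α + 1))))
    convert hlim.congr' ?_ using 2
    · ring
    · filter_upwards [eventually_gt_atTop 0] with t ht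
      rw [hode t ht]
      rfl

/-- Universal asymptotic growth-rate formula in the Chaplygin fluid universe:
any expanding solution of the flat Friedmann equation has
`a'/a → 4√(πG/(n(n−1))) · (B/(1+A))^{1/(2(α+1))}` as `t → ∞`. -/
theorem chaplygin_universal_growth_rate (n : ℕ) (hn : 2 ≤ n)
    (G A B C α : ℝ) (hG : 0 < G) (hA : -1 < A) (hB : 0 < B) (hC : 0 < C)
    (hα0 : 0 ≤ α) (hα1 : α ≤ 1) (a : ℝ → ℝ)
    (hpos : ∀ t > (0 : ℝ), 0 < a t)
    (hdiff : ∀ t > (0 : ℝ), DifferentiableAt ℝ a t)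
    (hinc : ∀ t > (0 : ℝ), 0 < deriv a t)
    (hinf : Tendsto a atTop atTop)
    (hode : ∀ t > (0 : ℝ),
      (deriv a t / a t) ^ 2 =
        (16 * π * G / ((n : ℝ) * ((n : ℝ) - 1))) * (1 + A) ^ (-(1 / (α + 1))) *
          (C * a t ^ (-((n : ℝ) * (1 + A) * (α + 1))) + B) ^ (1 / (α + 1))) :
    Tendsto (fun t => deriv a t / a t) atTop
      (nhds (4 * Real.sqrt (π * G / ((n : ℝ) * ((n : ℝ) - 1))) *
        (B / (1 + A)) ^ (1 / (2 * (α + 1))))) :=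
  chaplygin_universal_growth_rate_general n hn G A B C α hG hA hB hα0 a hpos hinc hinf hode
end

section
/- Let p, q, r be rational numbers with r ≠ 0, q = −1/2, and a = −k, b = σ with k ∈ {1,−1}, σ > 0. For the Friedmann integral ∫ u^0·(−k·u^γ + σ)^(−1/2) du with γ = 2(1 − 2/(n(1+A))) (γ ≠ 0, A rational), the Chebyshev integrability condition 'at least one of 1/γ, −1/2, 1/γ − 1/2 is an integer' holds if and only if A = 4N/(n(2N−1)) − 1 for some integer N, or A = 2/n + 1/(nN) − 1 for some nonzero integer N. -/
/-- Chebyshev integrability for the non-flat `Λ = 0` Friedmann integral: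
with `γ = 2(1 − 2/(n(1+A)))`, the condition that one of `1/γ`, `−1/2`,
`1/γ − 1/2` is an integer holds iff `A = 4N/(n(2N−1)) − 1` for some integer
`N` or `A = 2/n + 1/(nN) − 1` for some nonzero integer `N`. -/
theorem chebyshev_friedmann_integrable (n : ℕ) (hn : 1 ≤ n) (A : ℚ)
    (hA : A ≠ -1) (hγ : (n : ℚ) * (1 + A) ≠ 2) :
    let γ : ℚ := 2 * (1 - 2 / ((n : ℚ) * (1 + A)))
    ((∃ m : ℤ, 1 / γ = (m : ℚ)) ∨ (∃ m : ℤ, (-1 / 2 : ℚ) = (m : ℚ)) ∨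
      (∃ m : ℤ, 1 / γ - 1 / 2 = (m : ℚ))) ↔
    ((∃ N : ℤ, A = 4 * N / ((n : ℚ) * (2 * N - 1)) - 1) ∨
      (∃ N : ℤ, N ≠ 0 ∧ A = 2 / (n : ℚ) + 1 / ((n : ℚ) * N) - 1)) := by
  intro γ
  have hn0 : (n : ℚ) ≠ 0 := Nat.cast_ne_zero.mpr (by omega)
  have hA0 : (1 : ℚ) + A ≠ 0 := fun h => hA (by linarith)
  set s : ℚ := (n : ℚ) * (1 + A) with hsdef
  have hs0 : s ≠ 0 := mul_ne_zero hn0 hA0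
  have hs2 : s - 2 ≠ 0 := sub_ne_zero.mpr hγ
  have h1 : 1 / γ = s / (2 * (s - 2)) := by
    show 1 / (2 * (1 - 2 / s)) = _
    field_simp
  constructor
  · rintro (⟨m, hm⟩ | ⟨m, hm⟩ | ⟨m, hm⟩)
    · -- 1/γ = m ⟹ s(2m-1) = 4m
      left
      refine ⟨m, ?_⟩
      rw [h1] at hm
      have h2m : (2 * (m : ℚ) - 1) ≠ 0 := by
        intro h
        have h2 : (2 * m : ℤ) = 1 := by exact_mod_cast (by linarith : (2 * m : ℚ) = 1)
        omega
      rw [div_eq_iff (mul_ne_zero two_ne_zero hs2)] at hm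
      have hseq : s * (2 * (m : ℚ) - 1) = 4 * m := by linarith
      rw [eq_sub_iff_add_eq, eq_div_iff (mul_ne_zero hn0 h2m)]
      rw [hsdef] at hseq
      linear_combination hseq
    · exfalso
      have : (2 * m : ℤ) = -1 := by exact_mod_cast (by linarith : (2 * (m : ℚ)) = -1)
      omega
    · -- 1/γ - 1/2 = m ⟹ s * m = 2m + 1
      right
      rw [h1] at hm
      rw [sub_eq_iff_eq_add, div_eq_iff (mul_ne_zero two_ne_zero hs2)] at hm
      -- s = (m + 1/2) * (2*(s-2))  ⟹ s = (2m+1)(s-2) ⟹ s*(-2m) = -2(2m+1)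
      have hm0 : m ≠ 0 := by
        intro h; subst h; simp at hm
        nlinarith [hm]
      refine ⟨m, hm0, ?_⟩
      have hmq : (m : ℚ) ≠ 0 := Int.cast_ne_zero.mpr hm0
      have hseq : s * (m : ℚ) = 2 * m + 1 := by nlinarith [hm]
      have hAval : A + 1 = (2 * (m : ℚ) + 1) / ((n : ℚ) * m) := by
        rw [eq_div_iff (mul_ne_zero hn0 hmq)]
        rw [hsdef] at hseq
        linear_combination hseq
      rw [eq_sub_iff_add_eq, show 2 / (n : ℚ) + 1 / ((n : ℚ) * m) = (2 * (m : ℚ) + 1) / ((n : ℚ) * m) by field_simp]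
      linarith [hAval]
  · rintro (⟨N, hN⟩ | ⟨N, hN0, hN⟩)
    · left
      refine ⟨N, ?_⟩
      have h2N : (2 * (N : ℚ) - 1) ≠ 0 := by
        intro h
        have h2 : (2 * N : ℤ) = 1 := by exact_mod_cast (by linarith : (2 * (N : ℚ)) = 1)
        omega
      have hseq : s * (2 * (N : ℚ) - 1) = 4 * N := by
        rw [hsdef, hN]
        rw [show (n : ℚ) * (1 + (4 * N / (n * (2 * N - 1)) - 1)) * (2 * N - 1) = (n * (2 * N - 1)) * (4 * N / (n * (2 * N - 1))) by ring]
        exact mul_div_cancel₀ _ (mul_ne_zero hn0 h2N)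
      rw [h1, div_eq_iff (mul_ne_zero two_ne_zero hs2)]
      nlinarith [hseq]
    · right; right
      refine ⟨N, ?_⟩
      have hNq : (N : ℚ) ≠ 0 := Int.cast_ne_zero.mpr hN0
      have hseq : s * (N : ℚ) = 2 * N + 1 := by
        rw [hsdef, hN]
        field_simp
        ring
      rw [h1, sub_eq_iff_eq_add, div_eq_iff (mul_ne_zero two_ne_zero hs2)]
      nlinarith [hseq]
end
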